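/- Let k be an uncountable field and R = k[x,y]. Then the canonical ring homomorphism R → lim_{𝔞 ≠ 0} R/𝔞, into the inverse limit of R/𝔞 over all nonzero ideals 𝔞 of R, is bijective. -/

import Mathlib

/-!
Choose representatives `rep f` of the components of a compatible family on the principal ideals
`(f)`; compatibility says `f ∣ rep g - rep f` whenever `f ∣ g`, and `r` realises the family
iff it is correct modulo every `f ≠ 0`, i.e. `f ∣ rep f - r`. Write `R = k[x][y]`. Restricting
`rep (x - c)` to the line `x = c` gives `a_c ∈ k[y]`, and these restrictions agree with the ones
from horizontal lines at every point. Since `k` is uncountable, infinitely many `a_c` have degree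
at most some `d`. Reducing `rep P` modulo `P = ∏ (y - v)` over `d + 1` values `v` gives a
polynomial `r` of `y`-degree at most `d`; comparing degrees and counting roots, `r` restricts to
`a_c` on those infinitely many vertical lines and is correct on every horizontal line.

So `r` is correct modulo infinitely many pairwise coprime lines. For a prime `p`, infinitely many of
these lines are nonzero nonunits modulo `p`, and an induction on `n` shows that `r` is correct
modulo `p ^ n`: the obstruction at each step is an element of `R ⧸ (p)` divisible by arbitrarily
long products of these nonunits, hence zero because `R ⧸ (p)` is noetherian. Unique factorization
then gives `f ∣ rep f - r` for every `f ≠ 0`.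
-/

/-- A family of elements of the quotients `R ⧸ 𝔞`, indexed by the nonzero ideals `𝔞`
of `R`, is compatible if it commutes with the natural quotient (transition) maps.
Such families are exactly the elements of the inverse limit `lim_{𝔞 ≠ 0} R ⧸ 𝔞`. -/
def IsCompatibleFamily {R : Type*} [CommRing R]
    (x : ∀ a : {a : Ideal R // a ≠ ⊥}, R ⧸ a.1) : Prop :=
  ∀ (a b : {a : Ideal R // a ≠ ⊥}) (h : a.1 ≤ b.1),
    Ideal.Quotient.factor (S := a.1) (T := b.1) h (x a) = x b

open Polynomial
open scoped Function

lemma exists_infinite_fiber_of_uncountable {α : Type*} [Uncountable α] (f : α → ℕ) :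
    ∃ n, (f ⁻¹' {n}).Infinite := by
  by_contra! h
  have hcover : ⋃ n, f ⁻¹' {n} = Set.univ := by ext; simp
  exact Set.not_countable_univ (hcover ▸ Set.countable_iUnion fun n => (h n).countable)

lemma eq_zero_of_forall_prod_dvd {α : Type*} [CommMonoidWithZero α] [IsCancelMulZero α]
    [WfDvdMonoid α] {w : ℕ → α} (hw : ∀ i, ¬IsUnit (w i)) {a : α}
    (ha : ∀ m, (∏ i ∈ Finset.range m, w i) ∣ a) : a = 0 := by
  by_contra ha0
  choose t ht using ha
  have hstep (m : ℕ) : DvdNotUnit (t (m + 1)) (t m) := by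
    have hprod : ∏ i ∈ Finset.range m, w i ≠ 0 := fun h => ha0 (by rw [ht m, h, zero_mul])
    refine ⟨fun h => ha0 (by rw [ht (m + 1), h, mul_zero]), w m, hw m, ?_⟩
    exact mul_left_cancel₀ hprod (by rw [← ht m, ht (m + 1), Finset.prod_range_succ]; ac_rfl)
  have : IsWellFounded α DvdNotUnit := ⟨wellFounded_dvdNotUnit⟩
  obtain ⟨m, hm⟩ := WellFounded.not_rel_apply_succ (r := DvdNotUnit) t
  exact hm (hstep m)

lemma isCoprime_of_isUnit_mk {R : Type*} [CommRing R] {p a : R}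
    (h : IsUnit (Ideal.Quotient.mk (Ideal.span {p}) a)) : IsCoprime p a := by
  obtain ⟨z, hz⟩ := h.exists_right_inv
  obtain ⟨z, rfl⟩ := Ideal.Quotient.mk_surjective z
  rw [← map_mul, ← map_one (Ideal.Quotient.mk _), Ideal.Quotient.eq,
    Ideal.mem_span_singleton] at hz
  obtain ⟨t, ht⟩ := hz
  exact ⟨-t, z, by linear_combination ht⟩

lemma eq_zero_of_forall_mem_of_ne_bot {R : Type*} [CommRing R] [IsDomain R] (hR : ¬IsField R)
    {a : R} (ha : ∀ I : Ideal R, I ≠ ⊥ → a ∈ I) : a = 0 := by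
  by_contra ha0
  obtain ⟨b, hb0, hb⟩ := Ring.exists_not_isUnit_of_not_isField hR
  obtain ⟨t, ht⟩ := Ideal.mem_span_singleton.1 <| ha (Ideal.span {a * b})
    (by rw [Ne, Ideal.span_singleton_eq_bot]; exact mul_ne_zero ha0 hb0)
  exact hb (.of_mul_eq_one t (mul_left_cancel₀ ha0 (by linear_combination -ht)))

namespace Polynomial

variable {R : Type*} [CommRing R]

lemma C_X_sub_C_dvd_iff (c : R) (f : R[X][X]) :
    C (X - C c) ∣ f ↔ f.map (evalRingHom c) = 0 := by
  rw [C_dvd_iff_dvd_coeff, Polynomial.ext_iff]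
  simp [dvd_iff_isRoot]

lemma eval_map_evalRingHom (c c' : R) (f : R[X][X]) :
    (f.map (evalRingHom c)).eval c' = (f.eval (C c')).eval c := by
  rw [eval_map, ← coe_evalRingHom, eval, hom_eval₂]
  simp

lemma not_isCoprime_X_sub_C_of_natDegree_eq_zero {p : R[X]} (hp : p.natDegree = 0)
    (hpu : ¬IsUnit p) (a : R) : ¬IsCoprime p (X - C a) := fun h => by
  have := h.map (evalRingHom a)
  rw [coe_evalRingHom, eval_sub, eval_X, eval_C, sub_self, isCoprime_zero_right,
    eq_C_of_natDegree_eq_zero hp, eval_C] at this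
  exact hpu (eq_C_of_natDegree_eq_zero hp ▸ isUnit_C.2 this)

lemma not_dvd_X_sub_C_of_natDegree_eq_zero {p : R[X]} (hp : p.natDegree = 0)
    (hpu : ¬IsUnit p) (a : R) : ¬p ∣ X - C a := fun h => by
  rw [eq_C_of_natDegree_eq_zero hp, C_dvd_iff_dvd_coeff] at h
  exact hpu (eq_C_of_natDegree_eq_zero hp ▸
    isUnit_C.2 (isUnit_of_dvd_one (by simpa [coeff_X_one] using h 1)))

variable [IsDomain R]

lemma not_isCoprime_C_X_sub_C {p : R[X][X]} (hp : p.natDegree ≠ 0) {c : R}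
    (hc : p.leadingCoeff.eval c ≠ 0) : ¬IsCoprime p (C (X - C c)) := fun h => by
  have := h.map (mapRingHom (evalRingHom c))
  rw [coe_mapRingHom, map_C, coe_evalRingHom, eval_sub, eval_X, eval_C, sub_self, C_0,
    isCoprime_zero_right] at this
  exact hp (natDegree_map_of_leadingCoeff_ne_zero (evalRingHom c) hc ▸
    natDegree_eq_zero_of_isUnit this)

lemma not_dvd_C_X_sub_C {p : R[X][X]} (hp : p.natDegree ≠ 0) (c : R) : ¬p ∣ C (X - C c) :=
  fun h => hp (Nat.eq_zero_of_le_zero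
    (natDegree_C (X - C c) ▸ natDegree_le_of_dvd h (C_ne_zero.2 (X_sub_C_ne_zero c))))

end Polynomial

/-- A choice of representatives `rep f` of a compatible family of elements of the quotients
`R ⧸ (f)`, `f ≠ 0`. -/
def IsCoherent {R : Type*} [CommRing R] (rep : R → R) : Prop :=
  ∀ ⦃f g : R⦄, g ≠ 0 → f ∣ g → f ∣ rep g - rep f

namespace IsCoherent

section CommRing

variable {R : Type*} [CommRing R] {rep : R → R} {r : R}

lemma dvd_sub_iff (h : IsCoherent rep) {f g : R} (hg : g ≠ 0) (hfg : f ∣ g) :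
    f ∣ rep g - r ↔ f ∣ rep f - r := by
  rw [← dvd_sub_right (h hg hfg), sub_sub_sub_cancel_left, dvd_sub_comm]

lemma exists_dvd_sub_of_ringEquiv {S : Type*} [CommRing S] (e : R ≃+* S)
    (hS : ∀ rep : S → S, IsCoherent rep → ∃ r, ∀ f ≠ 0, f ∣ rep f - r)
    (h : IsCoherent rep) : ∃ r, ∀ f ≠ 0, f ∣ rep f - r := by
  obtain ⟨r, hr⟩ := hS (e ∘ rep ∘ e.symm) fun f g hg hfg => by
    rw [← map_dvd_iff e.symm]
    simpa using h (e.symm.map_ne_zero_iff.2 hg) (map_dvd e.symm hfg)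
  refine ⟨e.symm r, fun f hf => ?_⟩
  rw [← map_dvd_iff e]
  simpa using hr (e f) (e.map_ne_zero_iff.2 hf)

lemma dvd_sub_of_forall_prime_pow [IsDomain R] [UniqueFactorizationMonoid R]
    (h : IsCoherent rep) (hpow : ∀ (p : R) (n : ℕ), Prime p → p ^ n ∣ rep (p ^ n) - r)
    {f : R} (hf : f ≠ 0) : f ∣ rep f - r := by
  induction f using UniqueFactorizationMonoid.induction_on_coprime with
  | h0 => exact absurd rfl hf
  | h1 hu => exact hu.dvd
  | hpr n hp => exact hpow _ n hp
  | hcp hab ha hb =>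
    exact hab.mul_dvd ((h.dvd_sub_iff hf (dvd_mul_right _ _)).2 (ha (left_ne_zero_of_mul hf)))
      ((h.dvd_sub_iff hf (dvd_mul_left _ _)).2 (hb (right_ne_zero_of_mul hf)))

lemma prime_pow_dvd_sub [IsDomain R] [IsNoetherianRing R] (h : IsCoherent rep) {p : R}
    (hp : Prime p) {ℓ : ℕ → R} (hcop : Pairwise (IsCoprime on ℓ))
    (hℓ : ∀ i, ℓ i ∣ rep (ℓ i) - r) (hpℓ : ∀ i, ¬p ∣ ℓ i) (hℓp : ∀ i, ¬IsCoprime p (ℓ i))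
    (n : ℕ) : p ^ n ∣ rep (p ^ n) - r := by
  induction n with
  | zero => simp
  | succ n ih =>
    have hpn1 : p ^ (n + 1) ≠ 0 := pow_ne_zero _ hp.ne_zero
    obtain ⟨F, hF⟩ := (h.dvd_sub_iff hpn1 (pow_dvd_pow p n.le_succ)).2 ih
    suffices p ∣ F by
      obtain ⟨G, rfl⟩ := this
      exact ⟨G, by rw [hF, pow_succ, mul_assoc]⟩
    have : (Ideal.span {p}).IsPrime := (Ideal.span_singleton_prime hp.ne_zero).2 hp
    rw [← Ideal.mem_span_singleton, ← Ideal.Quotient.eq_zero_iff_mem]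
    refine eq_zero_of_forall_prod_dvd (fun i hu => hℓp i (isCoprime_of_isUnit_mk hu)) fun m => ?_
    -- Compare `rep (p ^ (n + 1) * W)` with `rep (p ^ (n + 1))` and with `r`: modulo `p`,
    -- `F` becomes a multiple of `W`.
    set W := ∏ i ∈ Finset.range m, ℓ i
    have hpW : ¬p ∣ W := fun hdvd => by
      obtain ⟨i, -, hi⟩ := (hp.dvd_finsetProd_iff _).1 hdvd
      exact hpℓ i hi
    have hs0 : p ^ (n + 1) * W ≠ 0 := mul_ne_zero hpn1 fun h0 => hpW (h0 ▸ dvd_zero p)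
    obtain ⟨a, ha⟩ := h hs0 (dvd_mul_right _ _)
    obtain ⟨b, hb⟩ : W ∣ rep (p ^ (n + 1) * W) - r :=
      Finset.prod_dvd_of_coprime (fun i _ j _ hij => hcop hij) fun i hi =>
        (h.dvd_sub_iff hs0 (dvd_mul_of_dvd_right (Finset.dvd_prod_of_mem ℓ hi) _)).2 (hℓ i)
    obtain ⟨b', rfl⟩ : p ^ n ∣ b :=
      hp.pow_dvd_of_dvd_mul_left n hpW ⟨p * a + F, by linear_combination ha + hF - hb⟩
    have hFW : F = W * b' - p * a := by
      refine mul_left_cancel₀ (pow_ne_zero n hp.ne_zero) ?_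
      linear_combination hb - ha - hF
    refine ⟨Ideal.Quotient.mk _ b', ?_⟩
    rw [← map_prod, ← map_mul, Ideal.Quotient.eq, hFW, Ideal.mem_span_singleton]
    exact ⟨-a, by ring⟩

lemma modByMonic_dvd_sub [Nontrivial R] {rep : R[X] → R[X]} (h : IsCoherent rep) {P q : R[X]}
    (hP : P.Monic) (hqP : q ∣ P) : q ∣ rep q - rep P %ₘ P :=
  (h.dvd_sub_iff hP.ne_zero hqP).1 <|
    hqP.trans ⟨rep P /ₘ P, by rw [modByMonic_eq_sub_mul_div, sub_sub_cancel]⟩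

end CommRing

section Bivariate

variable {R : Type*} [CommRing R] [IsDomain R] {rep : R[X][X] → R[X][X]}

/-- In `R[X][X]`, `C (X - C c)` is the line `x = c` and `X - C (C c')` the line `y = c'`; both
sides are the value at `(c, c')` of `rep` of the product of the two lines. -/
lemma eval_map_rep_C_X_sub_C (h : IsCoherent rep) (c c' : R) :
    ((rep (C (X - C c))).map (evalRingHom c)).eval c' =
      ((rep (X - C (C c'))).eval (C c')).eval c := by
  have hg : C (X - C c) * (X - C (C c')) ≠ 0 :=
    mul_ne_zero (C_ne_zero.2 (X_sub_C_ne_zero c)) (X_sub_C_ne_zero _)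
  have hx : (rep (C (X - C c))).map (evalRingHom c) =
      (rep (C (X - C c) * (X - C (C c')))).map (evalRingHom c) := by
    rw [← sub_eq_zero, ← Polynomial.map_sub, ← C_X_sub_C_dvd_iff, dvd_sub_comm]
    exact h hg (dvd_mul_right _ _)
  have hy : (rep (X - C (C c'))).eval (C c') =
      (rep (C (X - C c) * (X - C (C c')))).eval (C c') := by
    rw [← sub_eq_zero, ← eval_sub, ← IsRoot, ← dvd_iff_isRoot, dvd_sub_comm]
    exact h hg (dvd_mul_left _ _)
  rw [hx, hy, eval_map_evalRingHom]

lemma exists_dvd_sub_of_natDegree_le (h : IsCoherent rep) {V : Set R} (hV : V.Infinite) {d : ℕ}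
    (hd : ∀ c ∈ V, ((rep (C (X - C c))).map (evalRingHom c)).natDegree ≤ d) :
    ∃ r, (∀ c ∈ V, C (X - C c) ∣ rep (C (X - C c)) - r) ∧
      ∀ c', X - C (C c') ∣ rep (X - C (C c')) - r := by
  obtain ⟨s, -, hs⟩ := hV.exists_subset_card_eq (d + 1)
  set P := ∏ v ∈ s, (X - C (C v))
  have hPm : P.Monic := monic_prod_of_monic _ _ fun v _ => monic_X_sub_C _
  have hPdeg : P.natDegree = d + 1 := by
    rw [natDegree_prod_of_monic _ _ fun v _ => monic_X_sub_C _]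
    simp [hs]
  set r := rep P %ₘ P
  have hrdeg : r.natDegree < d + 1 :=
    hPdeg ▸ natDegree_modByMonic_lt _ hPm fun h1 => by simp [h1] at hPdeg
  have hs_eval : ∀ v ∈ s, r.eval (C v) = (rep (X - C (C v))).eval (C v) := fun v hv => by
    have := h.modByMonic_dvd_sub hPm (Finset.dvd_prod_of_mem _ hv)
    rwa [dvd_iff_isRoot, IsRoot, eval_sub, sub_eq_zero, eq_comm] at this
  have hV_map : ∀ c ∈ V, r.map (evalRingHom c) = (rep (C (X - C c))).map (evalRingHom c) := by
    intro c hc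
    rw [← sub_eq_zero]
    refine eq_zero_of_natDegree_lt_card_of_eval_eq_zero' _ s (fun v hv => ?_) ?_
    · rw [eval_sub, eval_map_evalRingHom, hs_eval v hv, h.eval_map_rep_C_X_sub_C, sub_self]
    · exact hs ▸ (natDegree_sub_le _ _).trans_lt
        (max_lt (natDegree_map_le.trans_lt hrdeg) (Nat.lt_succ_of_le (hd c hc)))
  have hH_eval : ∀ c', r.eval (C c') = (rep (X - C (C c'))).eval (C c') := fun c' => by
    rw [← sub_eq_zero]
    refine eq_zero_of_infinite_isRoot _ (hV.mono fun c hc => ?_)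
    rw [Set.mem_ofPred_eq, IsRoot, eval_sub, ← eval_map_evalRingHom, hV_map c hc,
      h.eval_map_rep_C_X_sub_C, sub_self]
  refine ⟨r, fun c hc => ?_, fun c' => ?_⟩
  · rw [C_X_sub_C_dvd_iff, Polynomial.map_sub, hV_map c hc, sub_self]
  · rw [dvd_iff_isRoot, IsRoot, eval_sub, hH_eval, sub_self]

end Bivariate

theorem exists_dvd_sub_of_uncountable {k : Type*} [Field k] [Uncountable k]
    {rep : k[X][X] → k[X][X]} (h : IsCoherent rep) : ∃ r, ∀ f ≠ 0, f ∣ rep f - r := by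
  obtain ⟨d, hd⟩ := exists_infinite_fiber_of_uncountable fun c : k =>
    ((rep (C (X - C c))).map (evalRingHom c)).natDegree
  obtain ⟨r, hV, hH⟩ := h.exists_dvd_sub_of_natDegree_le hd fun c hc => le_of_eq hc
  refine ⟨r, fun f hf => h.dvd_sub_of_forall_prime_pow (fun p n hp => ?_) hf⟩
  by_cases hp0 : p.natDegree = 0
  · set e := Infinite.natEmbedding k
    refine h.prime_pow_dvd_sub hp (ℓ := fun i => X - C (C (e i)))
      ((pairwise_coprime_X_sub_C e.injective).mono fun i j hij => by
        simpa using hij.map (mapRingHom C))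
      (fun i => hH _) (fun i => not_dvd_X_sub_C_of_natDegree_eq_zero hp0 hp.not_isUnit _)
      (fun i => not_isCoprime_X_sub_C_of_natDegree_eq_zero hp0 hp.not_isUnit _) n
  · have hV' := hd.sdiff (finite_setOfPred_isRoot (leadingCoeff_ne_zero.2 hp.ne_zero))
    set e := hV'.natEmbedding
    refine h.prime_pow_dvd_sub hp (ℓ := fun i => C (X - C (e i : k)))
      ((pairwise_coprime_X_sub_C (Subtype.val_injective.comp e.injective)).mono
        fun i j hij => hij.map C)
      (fun i => hV _ (e i).2.1) (fun i => not_dvd_C_X_sub_C hp0 _)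
      (fun i => not_isCoprime_C_X_sub_C hp0 (e i).2.2) n

end IsCoherent

lemma IsCompatibleFamily.exists_isCoherent {R : Type*} [CommRing R]
    {x : ∀ a : {a : Ideal R // a ≠ ⊥}, R ⧸ a.1} (hx : IsCompatibleFamily x) :
    ∃ rep : R → R, IsCoherent rep ∧
      ∀ (a : {a : Ideal R // a ≠ ⊥}) (f : R), f ∈ a.1 → f ≠ 0 →
        Ideal.Quotient.mk a.1 (rep f) = x a := by
  have hspan (f : R) (hf : f ≠ 0) : Ideal.span {f} ≠ ⊥ := by
    rwa [Ne, Ideal.span_singleton_eq_bot]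
  have hlift (f : R) : ∃ y : R, ∀ hf : f ≠ 0,
      Ideal.Quotient.mk (Ideal.span {f}) y = x ⟨_, hspan f hf⟩ := by
    by_cases hf : f = 0
    · exact ⟨0, fun hf' => absurd hf hf'⟩
    · obtain ⟨y, hy⟩ := Ideal.Quotient.mk_surjective (x ⟨_, hspan f hf⟩)
      exact ⟨y, fun _ => hy⟩
  choose rep hrep using hlift
  have hrep_mem (a : {a : Ideal R // a ≠ ⊥}) (f : R) (hfa : f ∈ a.1) (hf : f ≠ 0) :
      Ideal.Quotient.mk a.1 (rep f) = x a := by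
    have hle : Ideal.span {f} ≤ a.1 := (Ideal.span_singleton_le_iff_mem _).2 hfa
    rw [← hx ⟨_, hspan f hf⟩ a hle, ← hrep f hf, Ideal.Quotient.factor_mk]
  refine ⟨rep, fun f g hg hfg => ?_, hrep_mem⟩
  have hf : f ≠ 0 := fun hf => hg (zero_dvd_iff.1 (hf ▸ hfg))
  rw [← Ideal.mem_span_singleton, ← Ideal.Quotient.eq,
    hrep_mem ⟨_, hspan f hf⟩ g (Ideal.mem_span_singleton.2 hfg) hg,
    hrep_mem ⟨_, hspan f hf⟩ f (Ideal.mem_span_singleton_self f) hf]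

/-- For `R = k[x,y]` with `k` an uncountable field, the canonical map
`R → lim_{𝔞 ≠ 0} R ⧸ 𝔞` is bijective: it is injective, and every compatible family
`(x_𝔞)_𝔞` comes from a (unique) element `r ∈ R`. -/
theorem canonical_map_bijective_of_uncountable
    (k : Type*) [Field k] [Uncountable k] :
    Function.Injective
        (fun (r : MvPolynomial (Fin 2) k)
            (a : {a : Ideal (MvPolynomial (Fin 2) k) // a ≠ ⊥}) =>
          Ideal.Quotient.mk a.1 r) ∧
      ∀ x : ∀ a : {a : Ideal (MvPolynomial (Fin 2) k) // a ≠ ⊥},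
            MvPolynomial (Fin 2) k ⧸ a.1,
        IsCompatibleFamily x →
          ∃ r : MvPolynomial (Fin 2) k, ∀ a, Ideal.Quotient.mk a.1 r = x a := by
  let e : MvPolynomial (Fin 2) k ≃+* k[X][X] :=
    ((MvPolynomial.finSuccEquiv k 1).trans
      (mapAlgEquiv (MvPolynomial.uniqueAlgEquiv k (Fin 1)))).toRingEquiv
  refine ⟨fun r s hrs => ?_, fun x hx => ?_⟩
  · rw [← sub_eq_zero]
    exact eq_zero_of_forall_mem_of_ne_bot
      (fun hF => Polynomial.not_isField _ (e.symm.toMulEquiv.isField hF))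
      fun I hI => Ideal.Quotient.eq.1 (congrFun hrs ⟨I, hI⟩)
  · obtain ⟨rep, hcoh, hrep⟩ := hx.exists_isCoherent
    obtain ⟨r, hr⟩ := hcoh.exists_dvd_sub_of_ringEquiv e
      fun _ h => IsCoherent.exists_dvd_sub_of_uncountable h
    refine ⟨r, fun a => ?_⟩
    obtain ⟨f, hfa, hf⟩ := Submodule.exists_mem_ne_zero_of_ne_bot a.2
    rw [← hrep a f hfa hf, Ideal.Quotient.eq, ← neg_mem_iff, neg_sub]
    exact (Ideal.span_singleton_le_iff_mem _).2 hfa (Ideal.mem_span_singleton.2 (hr f hf))
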